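/- Let x, y ∈ B²∖{0} with 0, x, y noncollinear, and set x* = x/|x|², y* = y/|y|², t_x = √(1/|x|² − 1), t_y = √(1/|y|² − 1). Then the circles S¹(x*, t_x) and S¹(y*, t_y) are orthogonal (i.e., |x* − y*|² = t_x² + t_y²) if and only if cos∠x0y = |x||y|, where ∠x0y is the angle at 0 between the segments [0,x] and [0,y]; equivalently, if and only if x·y = |x|²|y|², where x·y denotes the real inner product on ℂ ≅ ℝ². -/

import Mathlib

/-!
Inversion in the unit circle scales distances: `|x* - y*| = |x - y| / (|x| |y|)`. Expanding
`|x - y|² = |x|² + |y|² - 2 x·y`, the orthogonality condition `|x* - y*|² = t_x² + t_y²`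
with `t_x² = 1/|x|² - 1` becomes `x·y = |x|² |y|²`, and `cos ∠x0y = x·y / (|x| |y|)`
turns this into `cos ∠x0y = |x| |y|`.
-/

open Complex ComplexConjugate

noncomputable def arcosh (c : ℝ) : ℝ := Real.log (c + Real.sqrt (c ^ 2 - 1))

noncomputable def rhoH (x y : ℂ) : ℝ :=
  arcosh (1 + ‖x - y‖ ^ 2 / (2 * x.im * y.im))

noncomputable def rhoB (x y : ℂ) : ℝ :=
  2 * Real.arsinh (‖x - y‖ /
    (Real.sqrt (1 - ‖x‖ ^ 2) * Real.sqrt (1 - ‖y‖ ^ 2)))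

def lineThrough (p q : ℂ) : Set ℂ := {z : ℂ | ∃ t : ℝ, z = p + t • (q - p)}

def dotR (p q : ℂ) : ℝ := p.re * q.re + p.im * q.im

open EuclideanGeometry InnerProductGeometry RealInnerProductSpace

theorem dotR_eq_inner (p q : ℂ) : dotR p q = ⟪p, q⟫ := by
  rw [Complex.inner, dotR, mul_re, conj_re, conj_im]
  ring

theorem div_norm_sq_eq_inversion (x : ℂ) : x / (‖x‖ : ℂ) ^ 2 = inversion 0 1 x := by
  simp [inversion, div_eq_mul_inv, mul_comm]

theorem sq_sqrt_inv_sq_sub_one {r : ℝ} (h0 : 0 < r) (h1 : r ≤ 1) :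
    √(1 / r ^ 2 - 1) ^ 2 = 1 / r ^ 2 - 1 :=
  Real.sq_sqrt <| sub_nonneg.2 <| one_le_one_div (by positivity) (pow_le_one₀ h0.le h1)

section InnerProductSpace

variable {E : Type*} [NormedAddCommGroup E] [InnerProductSpace ℝ E] {x y : E}

theorem cos_angle_eq_mul_norm_iff (hx : x ≠ 0) (hy : y ≠ 0) :
    Real.cos (angle x y) = ‖x‖ * ‖y‖ ↔ ⟪x, y⟫ = ‖x‖ ^ 2 * ‖y‖ ^ 2 := by
  have : ‖x‖ * ‖y‖ ≠ 0 := by positivity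
  rw [cos_angle, div_eq_iff this]
  ring_nf

theorem dist_inversion_sq_eq_iff_inner_eq (hx : x ≠ 0) (hy : y ≠ 0) :
    dist (inversion 0 1 x) (inversion 0 1 y) ^ 2 = (1 / ‖x‖ ^ 2 - 1) + (1 / ‖y‖ ^ 2 - 1) ↔
      ⟪x, y⟫ = ‖x‖ ^ 2 * ‖y‖ ^ 2 := by
  have hx' : ‖x‖ ≠ 0 := norm_ne_zero_iff.2 hx
  have hy' : ‖y‖ ≠ 0 := norm_ne_zero_iff.2 hy
  rw [dist_inversion_inversion hx hy, dist_zero_right, dist_zero_right, dist_eq_norm, mul_pow,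
    norm_sub_sq_real]
  field_simp
  constructor <;> intro h <;> linarith

end InnerProductSpace

theorem orthogonal_inversion_circles_general (x y : ℂ)
    (hx1 : ‖x‖ < 1) (hy1 : ‖y‖ < 1) (hx0 : x ≠ 0) (hy0 : y ≠ 0)
    (xstar ystar : ℂ)
    (hxstar : xstar = x / ((‖x‖ : ℂ) ^ 2))
    (hystar : ystar = y / ((‖y‖ : ℂ) ^ 2))
    (tx ty : ℝ)
    (htx : tx = Real.sqrt (1 / ‖x‖ ^ 2 - 1))
    (hty : ty = Real.sqrt (1 / ‖y‖ ^ 2 - 1)) :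
    (‖xstar - ystar‖ ^ 2 = tx ^ 2 + ty ^ 2 ↔
      Real.cos (InnerProductGeometry.angle x y) = ‖x‖ * ‖y‖) ∧
    (Real.cos (InnerProductGeometry.angle x y) = ‖x‖ * ‖y‖ ↔
      dotR x y = ‖x‖ ^ 2 * ‖y‖ ^ 2) := by
  subst xstar ystar tx ty
  rw [cos_angle_eq_mul_norm_iff hx0 hy0, dotR_eq_inner, div_norm_sq_eq_inversion,
    div_norm_sq_eq_inversion, ← dist_eq_norm, sq_sqrt_inv_sq_sub_one (norm_pos_iff.2 hx0) hx1.le,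
    sq_sqrt_inv_sq_sub_one (norm_pos_iff.2 hy0) hy1.le]
  exact ⟨dist_inversion_sq_eq_iff_inner_eq hx0 hy0, Iff.rfl⟩

/-- For `x, y ∈ B² \ {0}` with `0, x, y` noncollinear, the circles `S¹(x*, t_x)` and
`S¹(y*, t_y)`, where `x* = x/|x|²`, `t_x = √(1/|x|² - 1)` (and similarly for `y`), are
orthogonal if and only if `cos ∠x0y = |x| |y|`, equivalently `x · y = |x|² |y|²`
(real inner product). -/
theorem orthogonal_inversion_circles (x y : ℂ)
    (hx1 : ‖x‖ < 1) (hy1 : ‖y‖ < 1) (hx0 : x ≠ 0) (hy0 : y ≠ 0)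
    (hncol : ¬ Collinear ℝ ({0, x, y} : Set ℂ))
    (xstar ystar : ℂ)
    (hxstar : xstar = x / ((‖x‖ : ℂ) ^ 2))
    (hystar : ystar = y / ((‖y‖ : ℂ) ^ 2))
    (tx ty : ℝ)
    (htx : tx = Real.sqrt (1 / ‖x‖ ^ 2 - 1))
    (hty : ty = Real.sqrt (1 / ‖y‖ ^ 2 - 1)) :
    (‖xstar - ystar‖ ^ 2 = tx ^ 2 + ty ^ 2 ↔
      Real.cos (InnerProductGeometry.angle x y) = ‖x‖ * ‖y‖) ∧
    (Real.cos (InnerProductGeometry.angle x y) = ‖x‖ * ‖y‖ ↔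
      dotR x y = ‖x‖ ^ 2 * ‖y‖ ^ 2) :=
  orthogonal_inversion_circles_general x y hx1 hy1 hx0 hy0 xstar ystar hxstar hystar tx ty htx hty
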